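/- arXiv:math/0504041 — 2 statements merged into one kernel-verified Lean document; each statement's English description precedes it below -/
import Mathlib

section
/- Let W be a finite Coxeter group with simple reflections S, longest element w_0, and J ⊆ S with parabolic subgroup W_J. Then the coset W_J w_0 is an upper set in the Bruhat order: if v ∈ W_J and x ∈ W satisfy v w_0 ≤ x in the Bruhat order, then x ∈ W_J w_0. -/
/-!
Write `u ⋖ w` (`BruhatStep`) when `w = u * t` for a reflection `t` with `ℓ u < ℓ w`; its
reflexive-transitive closure is the chain form of the Bruhat order. The permutations
`(t, ε) ↦ (s t s, ε + [t = s])` of `W × ZMod 2` satisfy the Coxeter relations, and in the resulting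
action the second coordinate of `w • (t, 0)` is `1` exactly when `t` is a right inversion of `w`.
This inversion parity is a cocycle. It gives the lifting property, hence that subwords of reduced
words multiply to elements chain-below; it shows that right multiplication by `w₀⁻¹`, which
inverts every reflection, reverses `⋖`; and it shows that inversions of elements of `W_J` lie in
`W_J`, so everything chain-below an element of `W_J` stays in `W_J`. Thus `v w₀ ≤ x` gives
`x w₀⁻¹ ≤ v`, i.e. `x ∈ W_J w₀`.
-/

/-- The Bruhat order on a Coxeter group: `x ≤ y` iff some reduced word for `y` contains a
subword whose product is `x`. -/
def bruhatLE {B W : Type*} [Group W] {M : CoxeterMatrix B} (cs : CoxeterSystem M W)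
    (x y : W) : Prop :=
  ∃ ω : List B, cs.IsReduced ω ∧ cs.wordProd ω = y ∧
    ∃ ω' : List B, ω'.Sublist ω ∧ cs.wordProd ω' = x

lemma ZMod.two_eq_zero_or_eq_one (x : ZMod 2) : x = 0 ∨ x = 1 := by
  decide +revert

namespace CoxeterSystem

open scoped Classical

variable {B W : Type*} [Group W] {M : CoxeterMatrix B} (cs : CoxeterSystem M W)

local prefix:100 "s" => cs.simple
local prefix:100 "π" => cs.wordProd
local prefix:100 "ℓ" => cs.length
local prefix:100 "ris" => cs.rightInvSeq

lemma simple_mul_mul_simple_eq_iff (i : B) (t u : W) : s i * t * s i = u ↔ t = s i * u * s i := by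
  constructor <;> rintro rfl <;> simp [mul_assoc]

noncomputable def simplePerm (i : B) : Equiv.Perm (W × ZMod 2) :=
  Function.Involutive.toPerm (fun p => (s i * p.1 * s i, p.2 + if p.1 = s i then 1 else 0)) <| by
    rintro ⟨t, ε⟩
    refine Prod.ext ?_ ?_
    · simp [mul_assoc]
    · simp only [simple_mul_mul_simple_eq_iff, simple_mul_simple_cancel_right, add_assoc,
        CharTwo.add_self_eq_zero, add_zero]

lemma simplePerm_apply (i : B) (t : W) (ε : ZMod 2) :
    cs.simplePerm i (t, ε) = (s i * t * s i, ε + if t = s i then 1 else 0) := rfl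

lemma simplePerm_mul_simplePerm_pow_apply (i j : B) (k : ℕ) (t : W) (ε : ZMod 2) :
    ((cs.simplePerm i * cs.simplePerm j) ^ k) (t, ε) =
      ((s i * s j) ^ k * t * (s j * s i) ^ k,
        ε + ∑ r ∈ Finset.range (2 * k), if t = (s j * s i) ^ r * s j then 1 else 0) := by
  induction k generalizing t ε with
  | zero => simp
  | succ k ih =>
    have hconj (r : ℕ) : s j * (s i * ((s j * s i) ^ r * s j) * s i) * s j =
        (s j * s i) ^ (r + 2) * s j := by
      rw [pow_succ' _ (r + 1), pow_succ]
      simp only [mul_assoc]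
    rw [pow_succ, Equiv.Perm.mul_apply, Equiv.Perm.mul_apply, simplePerm_apply, simplePerm_apply,
      ih]
    refine Prod.ext ?_ ?_
    · rw [pow_succ (s i * s j), pow_succ' (s j * s i)]
      simp only [mul_assoc]
    · rw [show 2 * (k + 1) = 2 * k + 1 + 1 by ring, Finset.sum_range_succ', Finset.sum_range_succ']
      simp only [simple_mul_mul_simple_eq_iff, hconj, pow_zero, one_mul, zero_add, pow_one]
      abel

lemma isLiftable_simplePerm : M.IsLiftable cs.simplePerm := by
  intro i j
  ext ⟨t, ε⟩ : 1
  rw [simplePerm_mul_simplePerm_pow_apply, two_mul, Finset.sum_range_add]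
  simp only [pow_add, cs.simple_mul_simple_pow, cs.simple_mul_simple_pow', one_mul, mul_one,
    CharTwo.add_self_eq_zero, add_zero, Equiv.Perm.one_apply]

noncomputable def signedConj : W →* Equiv.Perm (W × ZMod 2) :=
  cs.lift ⟨cs.simplePerm, cs.isLiftable_simplePerm⟩

lemma signedConj_simple (i : B) : cs.signedConj (s i) = cs.simplePerm i :=
  cs.lift_apply_simple cs.isLiftable_simplePerm i

lemma signedConj_wordProd_apply (ω : List B) (t : W) (ε : ZMod 2) :
    cs.signedConj (π ω) (t, ε) = (π ω * t * (π ω)⁻¹, ε + (ris ω).count t) := by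
  induction ω generalizing ε with
  | nil => simp
  | cons i ω ih =>
    rw [wordProd_cons, map_mul, Equiv.Perm.mul_apply, ih, signedConj_simple, simplePerm_apply]
    refine Prod.ext ?_ ?_
    · simp [mul_assoc]
    · have : (π ω * t * (π ω)⁻¹ = s i) ↔ ((π ω)⁻¹ * s i * π ω = t) := by
        rw [eq_comm (b := t), mul_inv_eq_iff_eq_mul, mul_assoc, eq_inv_mul_iff_mul_eq]
      simp [rightInvSeq, List.count_cons, this, add_assoc]

noncomputable def inversionParity (w t : W) : ZMod 2 := (cs.signedConj w (t, 0)).2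

lemma signedConj_apply (w t : W) (ε : ZMod 2) :
    cs.signedConj w (t, ε) = (w * t * w⁻¹, ε + cs.inversionParity w t) := by
  obtain ⟨ω, rfl⟩ := cs.wordProd_surjective w
  simp [inversionParity, signedConj_wordProd_apply]

lemma inversionParity_wordProd (ω : List B) (t : W) :
    cs.inversionParity (π ω) t = (ris ω).count t := by
  simp [inversionParity, signedConj_wordProd_apply]

lemma inversionParity_one (t : W) : cs.inversionParity 1 t = 0 := by
  simp [inversionParity]

lemma inversionParity_simple (i : B) (t : W) :
    cs.inversionParity (s i) t = if t = s i then 1 else 0 := by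
  simp [inversionParity, signedConj_simple, simplePerm_apply]

lemma inversionParity_mul (u v t : W) :
    cs.inversionParity (u * v) t = cs.inversionParity v t + cs.inversionParity u (v * t * v⁻¹) := by
  have h := congrArg Prod.snd (cs.signedConj_apply (u * v) t 0)
  rw [map_mul, Equiv.Perm.mul_apply, signedConj_apply, signedConj_apply] at h
  simpa using h.symm

lemma inversionParity_self {t : W} (ht : cs.IsReflection t) : cs.inversionParity t t = 1 := by
  obtain ⟨u, i, rfl⟩ := ht
  have h₁ := cs.inversionParity_mul (u * s i) u⁻¹ (u * s i * u⁻¹)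
  have h₂ := cs.inversionParity_mul u (s i) (s i)
  have h₃ := cs.inversionParity_mul u u⁻¹ (u * s i * u⁻¹)
  have hs : u⁻¹ * (u * s i * u⁻¹) * u = s i := by group
  simp only [mul_inv_cancel, inversionParity_one, inversionParity_simple, if_true, inv_inv,
    inv_simple, simple_mul_simple_cancel_right, hs] at h₁ h₂ h₃
  linear_combination h₁ + h₂ - h₃

lemma length_mul_lt_of_inversionParity_eq_one {w t : W} (h : cs.inversionParity w t = 1) :
    ℓ (w * t) < ℓ w := by
  obtain ⟨ω, hω, rfl⟩ := cs.exists_isReduced w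
  rw [inversionParity_wordProd, ZMod.natCast_eq_one_iff_odd] at h
  exact (cs.isRightInversion_of_mem_rightInvSeq hω (List.count_pos_iff.mp h.pos)).2

lemma inversionParity_eq_one_iff {w t : W} (ht : cs.IsReflection t) :
    cs.inversionParity w t = 1 ↔ ℓ (w * t) < ℓ w := by
  refine ⟨cs.length_mul_lt_of_inversionParity_eq_one, fun hlt => ?_⟩
  refine (ZMod.two_eq_zero_or_eq_one _).resolve_left fun h0 => ?_
  have h1 : cs.inversionParity (w * t) t = 1 := by
    rw [inversionParity_mul, cs.inversionParity_self ht, ht.mul_self, one_mul, ht.inv, h0, add_zero]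
  have := cs.length_mul_lt_of_inversionParity_eq_one h1
  rw [mul_assoc, ht.mul_self, mul_one] at this
  omega

lemma inversionParity_eq_zero_iff {w t : W} (ht : cs.IsReflection t) :
    cs.inversionParity w t = 0 ↔ ℓ w < ℓ (w * t) := by
  have hne := ht.length_mul_left_ne w
  constructor
  · intro h
    have := (cs.inversionParity_eq_one_iff ht).not.mp (by rw [h]; exact zero_ne_one)
    omega
  · intro hlt
    refine (ZMod.two_eq_zero_or_eq_one _).resolve_right fun h => ?_
    have := (cs.inversionParity_eq_one_iff ht).mp h
    omega

lemma mem_closure_of_inversionParity_eq_one {J : Set B} {w t : W}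
    (hw : w ∈ Subgroup.closure (cs.simple '' J)) (h : cs.inversionParity w t = 1) :
    t ∈ Subgroup.closure (cs.simple '' J) := by
  induction hw using Subgroup.closure_induction generalizing t with
  | mem x hx =>
    obtain ⟨j, hj, rfl⟩ := hx
    rw [inversionParity_simple] at h
    split_ifs at h with ht
    · exact ht ▸ Subgroup.subset_closure (Set.mem_image_of_mem _ hj)
    · exact absurd h zero_ne_one
  | one => exact absurd h (by simp [inversionParity_one])
  | mul x y hx hy ihx ihy =>
    rw [inversionParity_mul] at h
    rcases ZMod.two_eq_zero_or_eq_one (cs.inversionParity y t) with hy0 | hy1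
    · rw [hy0, zero_add] at h
      rw [show t = y⁻¹ * (y * t * y⁻¹) * y by group]
      exact Subgroup.mul_mem _ (Subgroup.mul_mem _ (inv_mem hy) (ihx h)) hy
    · exact ihy hy1
  | inv x hx ihx =>
    have h1 := cs.inversionParity_mul x x⁻¹ t
    rw [mul_inv_cancel, inversionParity_one, h, inv_inv, eq_comm, CharTwo.add_eq_zero] at h1
    rw [show t = x * (x⁻¹ * t * x) * x⁻¹ by group]
    exact Subgroup.mul_mem _ (Subgroup.mul_mem _ hx (ihx h1.symm)) (inv_mem hx)

def BruhatStep (u w : W) : Prop := cs.IsReflection (u⁻¹ * w) ∧ ℓ u < ℓ w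

lemma bruhatStep_simple_mul {w : W} {i : B} (h : ℓ w < ℓ (s i * w)) :
    cs.BruhatStep w (s i * w) :=
  ⟨by simpa [mul_assoc] using (cs.isReflection_simple i).conj w⁻¹, h⟩

lemma BruhatStep.simple_mul_eq_or {u w : W} (h : cs.BruhatStep u w) (i : B) :
    s i * u = w ∨ cs.BruhatStep (s i * u) (s i * w) := by
  obtain ⟨t, rfl⟩ : ∃ t, w = u * t := ⟨u⁻¹ * w, by group⟩
  obtain ⟨ht, hlt⟩ := h
  rw [inv_mul_cancel_left] at ht
  refine or_iff_not_imp_left.2 fun hw => ⟨by simpa [mul_assoc] using ht, ?_⟩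
  have hconj : ¬ u * t * u⁻¹ = s i := fun h => hw (by rw [← h]; group)
  have h0 : cs.inversionParity (s i * u) t = 0 := by
    rw [inversionParity_mul, (cs.inversionParity_eq_zero_iff ht).2 hlt, inversionParity_simple,
      if_neg hconj, add_zero]
  simpa [mul_assoc] using (cs.inversionParity_eq_zero_iff ht).1 h0

lemma reflTransGen_bruhatStep_simple_mul_or {u w : W} (h : Relation.ReflTransGen cs.BruhatStep u w)
    (i : B) : Relation.ReflTransGen cs.BruhatStep (s i * u) w ∨
      Relation.ReflTransGen cs.BruhatStep (s i * u) (s i * w) := by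
  induction h using Relation.ReflTransGen.head_induction_on with
  | refl => exact .inr .refl
  | head hstep hrest ih =>
    rcases hstep.simple_mul_eq_or cs i with h | h
    · exact .inl (h ▸ hrest)
    · exact ih.imp (.head h) (.head h)

lemma reflTransGen_bruhatStep_of_sublist {ω σ : List B} (hω : cs.IsReduced ω) (h : σ.Sublist ω) :
    Relation.ReflTransGen cs.BruhatStep (π σ) (π ω) := by
  induction ω generalizing σ with
  | nil => rw [List.sublist_nil.mp h]
  | cons i ω ih =>
    have hω' : cs.IsReduced ω := by simpa using hω.drop 1
    have hstep : cs.BruhatStep (π ω) (s i * π ω) := by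
      apply bruhatStep_simple_mul
      have : ℓ (s i * π ω) = ω.length + 1 := by simpa [IsReduced, wordProd_cons] using hω
      rw [this, hω']
      omega
    rw [wordProd_cons]
    rcases List.sublist_cons_iff.mp h with hσ | ⟨σ, rfl, hσ⟩
    · exact (ih hω' hσ).tail hstep
    · rw [wordProd_cons]
      exact (cs.reflTransGen_bruhatStep_simple_mul_or (ih hω' hσ) i).elim
        (fun h' => h'.tail hstep) id

lemma BruhatStep.mul_right {u w m : W} (h : cs.BruhatStep u w)
    (hm : ∀ t, cs.IsReflection t → ℓ (m * t) < ℓ m) : cs.BruhatStep (w * m) (u * m) := by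
  obtain ⟨t, rfl⟩ : ∃ t, w = u * t := ⟨u⁻¹ * w, by group⟩
  obtain ⟨ht, hlt⟩ := h
  rw [inv_mul_cancel_left] at ht
  have ht' : cs.IsReflection (m⁻¹ * t * m) := by simpa using ht.conj m⁻¹
  have h0 : cs.inversionParity (u * t * m) (m⁻¹ * t * m) = 0 := by
    have hut : ℓ (u * t * t) < ℓ (u * t) := by rwa [mul_assoc, ht.mul_self, mul_one]
    rw [inversionParity_mul, (cs.inversionParity_eq_one_iff ht').2 (hm _ ht'),
      show m * (m⁻¹ * t * m) * m⁻¹ = t by group, (cs.inversionParity_eq_one_iff ht).2 hut,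
      CharTwo.add_self_eq_zero]
  refine ⟨?_, ?_⟩
  · rwa [show (u * t * m)⁻¹ * (u * m) = m⁻¹ * t⁻¹ * m by group, ht.inv]
  · have hprod : u * t * m * (m⁻¹ * t * m) = u * m := by
      rw [show u * t * m * (m⁻¹ * t * m) = u * (t * t) * m by group, ht.mul_self, mul_one]
    simpa [hprod] using (cs.inversionParity_eq_zero_iff ht').1 h0

lemma reflTransGen_bruhatStep_mul_right {u w m : W} (h : Relation.ReflTransGen cs.BruhatStep u w)
    (hm : ∀ t, cs.IsReflection t → ℓ (m * t) < ℓ m) :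
    Relation.ReflTransGen cs.BruhatStep (w * m) (u * m) := by
  induction h with
  | refl => exact .refl
  | tail _ hstep ih => exact .head (hstep.mul_right cs hm) ih

lemma mem_closure_of_reflTransGen_bruhatStep {J : Set B} {u w : W}
    (hw : w ∈ Subgroup.closure (cs.simple '' J)) (h : Relation.ReflTransGen cs.BruhatStep u w) :
    u ∈ Subgroup.closure (cs.simple '' J) := by
  induction h using Relation.ReflTransGen.head_induction_on with
  | refl => exact hw
  | @head a c hstep _ ih =>
    obtain ⟨ht, hlt⟩ := hstep
    have hr : cs.IsReflection (c⁻¹ * a) := by simpa using ht.isReflection_inv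
    have hpar : cs.inversionParity c (c⁻¹ * a) = 1 :=
      (cs.inversionParity_eq_one_iff hr).2 (by rwa [mul_inv_cancel_left])
    simpa using Subgroup.mul_mem _ ih (cs.mem_closure_of_inversionParity_eq_one ih hpar)

end CoxeterSystem

theorem coset_longestElement_upperSet_general {B W : Type*} [Group W]
    (M : CoxeterMatrix B) (cs : CoxeterSystem M W)
    (w0 : W) (hmax : ∀ w : W, cs.length w ≤ cs.length w0) (J : Set B)
    (v x : W) (hv : v ∈ Subgroup.closure (cs.simple '' J))
    (h : bruhatLE cs (v * w0) x) :
    ∃ u ∈ Subgroup.closure (cs.simple '' J), x = u * w0 := by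
  obtain ⟨ω, hω, rfl, σ, hσ, hσω⟩ := h
  have hw0 : ∀ t, cs.IsReflection t → cs.length (w0⁻¹ * t) < cs.length w0⁻¹ := fun t ht =>
    ((hmax _).trans_eq (cs.length_inv w0).symm).lt_of_ne (ht.length_mul_left_ne _)
  have hchain := cs.reflTransGen_bruhatStep_mul_right
    (cs.reflTransGen_bruhatStep_of_sublist hω hσ) hw0
  rw [hσω, mul_inv_cancel_right] at hchain
  exact ⟨_, cs.mem_closure_of_reflTransGen_bruhatStep hv hchain, by group⟩

/-- In a finite Coxeter group with longest element `w₀` and standard parabolic subgroup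
`W_J`, the coset `W_J w₀` is an upper set in the Bruhat order: if `v ∈ W_J` and
`v w₀ ≤ x`, then `x ∈ W_J w₀`. -/
theorem coset_longestElement_upperSet {B W : Type*} [Group W] [Finite W]
    (M : CoxeterMatrix B) (cs : CoxeterSystem M W)
    (w0 : W) (hmax : ∀ w : W, cs.length w ≤ cs.length w0) (J : Set B)
    (v x : W) (hv : v ∈ Subgroup.closure (cs.simple '' J))
    (h : bruhatLE cs (v * w0) x) :
    ∃ u ∈ Subgroup.closure (cs.simple '' J), x = u * w0 :=
  coset_longestElement_upperSet_general M cs w0 hmax J v x hv h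
end

section
/- Let M, X, Y be g-modules fitting into a short exact sequence 0 → X → M → Y → 0 such that for every finite-dimensional g-module V the induced map Hom_g(M, M ⊗ V) → Hom_g(M, Y ⊗ V) is surjective. If the canonical map U(g) → L(M,M) is surjective and the inclusion X → M induces an embedding of L(Y,Y) into L(M,Y) (via composition with the projection M → Y), then the canonical injection U(g)/Ann(Y) → L(Y,Y) is surjective. -/
open TensorProduct

/-- The locally finite part of `Hom_ℂ(A,B)` under the action `(x·f)(a) = x·f(a) - f(x·a)`. -/
def locFin (g : Type*) [LieRing g] [LieAlgebra ℂ g]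
    (A B : Type*) [AddCommGroup A] [Module ℂ A] [LieRingModule g A] [LieModule ℂ g A]
    [AddCommGroup B] [Module ℂ B] [LieRingModule g B] [LieModule ℂ g B] :
    Set (A →ₗ[ℂ] B) :=
  {f | ∃ W : Submodule ℂ (A →ₗ[ℂ] B),
    FiniteDimensional ℂ W ∧ f ∈ W ∧ ∀ (x : g), ∀ h ∈ W, ⁅x, h⁆ ∈ W}

/-- The representation map `U(g) → End_ℂ(A)` of a `g`-module `A`. -/
noncomputable def rho (g : Type*) [LieRing g] [LieAlgebra ℂ g]
    (A : Type*) [AddCommGroup A] [Module ℂ A] [LieRingModule g A] [LieModule ℂ g A] :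
    UniversalEnvelopingAlgebra ℂ g →ₐ[ℂ] Module.End ℂ A :=
  UniversalEnvelopingAlgebra.lift ℂ (LieModule.toEnd ℂ g A)


/-!
Given `f ∈ L(Y,Y)`, choose a finite-dimensional `g`-stable subspace `W ⊆ End(Y)` containing `f`.
The map `M → Hom(W, Y) ≅ Y ⊗ W*`, `m ↦ (w ↦ w (pr m))`, is `g`-equivariant, so it lifts to a
`g`-map `F : M → M ⊗ W*`. Contracting `F` against `W` gives a `g`-equivariant map
`C : W → End(M)`; its image is finite dimensional, so `C f ∈ L(M,M)` is the action of some
`u ∈ U(g)`. Since `pr ∘ C f = f ∘ pr` and `pr` is surjective, `u` acts on `Y` as `f`.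
-/

section TensorDual

variable {R L A B C : Type*} [CommRing R] [LieRing L] [LieAlgebra R L]
  [AddCommGroup A] [Module R A] [LieRingModule L A] [LieModule R L A]
  [AddCommGroup B] [Module R B] [LieRingModule L B] [LieModule R L B]
  [AddCommGroup C] [Module R C] [LieRingModule L C] [LieModule R L C]

def LieModuleHom.flip (G : A →ₗ⁅R,L⁆ B →ₗ[R] C) : B →ₗ⁅R,L⁆ A →ₗ[R] C :=
  { (G : A →ₗ[R] B →ₗ[R] C).flip with
    map_lie' := fun {x b} => by
      ext a
      change G a ⁅x, b⁆ = ⁅x, G a b⁆ - G ⁅x, a⁆ b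
      rw [G.map_lie₂]
      abel }

@[simp]
theorem LieModuleHom.flip_apply (G : A →ₗ⁅R,L⁆ B →ₗ[R] C) (b : B) (a : A) :
    G.flip b a = G a b :=
  rfl

variable (R L A) (W : Type*) [AddCommGroup W] [Module R W] [LieRingModule L W] [LieModule R L W]
  [Module.Projective R W] [Module.Finite R W]

noncomputable def tensorDualEquivHom : A ⊗[R] Module.Dual R W ≃ₗ⁅R,L⁆ (W →ₗ[R] A) :=
  let e := (TensorProduct.comm R A (Module.Dual R W)).trans (dualTensorHomEquiv R W A)
  have e_tmul (a : A) (φ : Module.Dual R W) (w : W) : e (a ⊗ₜ φ) w = φ w • a := by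
    simp [e, dualTensorHomEquiv]
  { e with
    map_lie' := fun {x t} => by
      induction t using TensorProduct.induction_on with
      | zero => simp
      | tmul a φ =>
        change e ⁅x, a ⊗ₜ φ⁆ = ⁅x, e (a ⊗ₜ φ)⁆
        ext w
        simp only [LieModule.lie_tmul_right, map_add, LinearMap.add_apply, e_tmul,
          LieHom.lie_apply, Module.Dual.lie_apply, lie_smul]
        module
      | add s t hs ht => simp_all }

@[simp]
theorem tensorDualEquivHom_tmul (a : A) (φ : Module.Dual R W) (w : W) :
    tensorDualEquivHom R L A W (a ⊗ₜ φ) w = φ w • a := by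
  simp [tensorDualEquivHom, dualTensorHomEquiv]

variable {R A}

theorem tensorDualEquivHom_map (p : A →ₗ[R] B) (t : A ⊗[R] Module.Dual R W) :
    tensorDualEquivHom R L B W (TensorProduct.map p LinearMap.id t) =
      p ∘ₗ tensorDualEquivHom R L A W t := by
  induction t using TensorProduct.induction_on with
  | zero => simp
  | tmul a φ => ext w; simp
  | add s t hs ht => simp_all [LinearMap.comp_add]

end TensorDual

theorem LieModuleHom.map_rho {g M Y : Type*} [LieRing g] [LieAlgebra ℂ g]
    [AddCommGroup M] [Module ℂ M] [LieRingModule g M] [LieModule ℂ g M]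
    [AddCommGroup Y] [Module ℂ Y] [LieRingModule g Y] [LieModule ℂ g Y]
    (pr : M →ₗ⁅ℂ,g⁆ Y) (u : UniversalEnvelopingAlgebra ℂ g) (m : M) :
    pr (rho g M u m) = rho g Y u (pr m) := by
  obtain ⟨t, rfl⟩ : ∃ t, UniversalEnvelopingAlgebra.mkAlgHom ℂ g t = u := Quotient.exists_rep u
  induction t using TensorAlgebra.induction generalizing m with
  | algebraMap r => simp [rho]
  | ι x => simp [rho]
  | mul a b ha hb => simp only [map_mul, Module.End.mul_apply, ha, hb]
  | add a b ha hb => simp only [map_add, LinearMap.add_apply, ha, hb]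

section LocallyFinite

variable {g A B : Type*} [LieRing g] [LieAlgebra ℂ g]
  [AddCommGroup A] [Module ℂ A] [LieRingModule g A] [LieModule ℂ g A]
  [AddCommGroup B] [Module ℂ B] [LieRingModule g B] [LieModule ℂ g B]

theorem mem_locFin_iff {f : A →ₗ[ℂ] B} :
    f ∈ locFin g A B ↔
      ∃ W : LieSubmodule ℂ g (A →ₗ[ℂ] B), FiniteDimensional ℂ W ∧ f ∈ W := by
  constructor
  · rintro ⟨W, hW, hfW, hlie⟩
    exact ⟨{ W with lie_mem := fun {x h} => hlie x h }, hW, hfW⟩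
  · rintro ⟨W, hW, hfW⟩
    exact ⟨W, hW, hfW, fun x h => W.lie_mem⟩

theorem LieModuleHom.apply_mem_locFin {W : Type*} [AddCommGroup W] [Module ℂ W]
    [LieRingModule g W] [LieModule ℂ g W] [FiniteDimensional ℂ W]
    (C : W →ₗ⁅ℂ,g⁆ (A →ₗ[ℂ] B)) (w : W) : C w ∈ locFin g A B :=
  mem_locFin_iff.2 ⟨C.range, LinearMap.finiteDimensional_range (C : W →ₗ[ℂ] A →ₗ[ℂ] B),
    C.mem_range_self w⟩

end LocallyFinite

section Transport

attribute [local instance] LieRing.ofAssociativeRing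

variable {R L U V : Type*} [CommRing R] [LieRing L] [LieAlgebra R L]
  [AddCommGroup U] [Module R U]
  [AddCommGroup V] [Module R V] [LieRingModule L V] [LieModule R L V]

variable (L) in
abbrev LinearEquiv.lieRingModule (e : U ≃ₗ[R] V) : LieRingModule L U :=
  LieRingModule.compLieHom U (e.symm.lieConj.toLieHom.comp (LieModule.toEnd R L V))

variable (L) in
theorem LinearEquiv.lieModule (e : U ≃ₗ[R] V) :
    letI := e.lieRingModule L
    LieModule R L U :=
  LieModule.compLieHom U (e.symm.lieConj.toLieHom.comp (LieModule.toEnd R L V))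

variable (L) in
def LinearEquiv.toLieModuleEquiv (e : U ≃ₗ[R] V) :
    letI := e.lieRingModule L
    letI := e.lieModule L
    U ≃ₗ⁅R,L⁆ V :=
  letI := e.lieRingModule L
  letI := e.lieModule L
  { e with
    map_lie' := fun {x u} => by
      change e (e.symm (⁅x, e u⁆)) = ⁅x, e u⁆
      rw [e.apply_symm_apply] }

end Transport

section TensorLifts

variable {R L M Y : Type*} [CommRing R] [LieRing L] [LieAlgebra R L]
  [AddCommGroup M] [Module R M] [LieRingModule L M] [LieModule R L M]
  [AddCommGroup Y] [Module R Y] [LieRingModule L Y] [LieModule R L Y]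

def HasTensorLifts (pr : M →ₗ⁅R,L⁆ Y) (V : Type*) [AddCommGroup V] [Module R V]
    [LieRingModule L V] [LieModule R L V] : Prop :=
  ∀ f : M →ₗ⁅R,L⁆ Y ⊗[R] V, ∃ F : M →ₗ⁅R,L⁆ M ⊗[R] V,
    ∀ m : M, TensorProduct.map (pr : M →ₗ[R] Y) LinearMap.id (F m) = f m

theorem HasTensorLifts.of_lieModuleEquiv {pr : M →ₗ⁅R,L⁆ Y} {V V' : Type*}
    [AddCommGroup V] [Module R V] [LieRingModule L V] [LieModule R L V]
    [AddCommGroup V'] [Module R V'] [LieRingModule L V'] [LieModule R L V']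
    (h : HasTensorLifts pr V) (e : V ≃ₗ⁅R,L⁆ V') : HasTensorLifts pr V' := by
  intro f
  let eₗ : V →ₗ[R] V' := (e : V →ₗ⁅R,L⁆ V')
  have he : eₗ ∘ₗ (e.symm : V' →ₗ⁅R,L⁆ V).toLinearMap = LinearMap.id :=
    LinearMap.ext e.apply_symm_apply
  obtain ⟨F, hF⟩ := h ((TensorProduct.LieModule.map LieModuleHom.id e.symm).comp f)
  refine ⟨(TensorProduct.LieModule.map LieModuleHom.id (e : V →ₗ⁅R,L⁆ V')).comp F, fun m => ?_⟩
  calc _ = TensorProduct.map LinearMap.id eₗ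
        (TensorProduct.map (pr : M →ₗ[R] Y) LinearMap.id (F m)) := by
        change TensorProduct.map _ _ (TensorProduct.map _ eₗ _) = _
        simp only [TensorProduct.map_map, LinearMap.id_comp, LinearMap.comp_id]
        rfl
    _ = f m := by
        rw [hF]
        change TensorProduct.map LinearMap.id eₗ
          (TensorProduct.map LinearMap.id (e.symm : V' →ₗ⁅R,L⁆ V).toLinearMap (f m)) = f m
        rw [TensorProduct.map_map, LinearMap.id_comp, he, TensorProduct.map_id, LinearMap.id_apply]

end TensorLifts

universe v w in
theorem HasTensorLifts.of_forall_finiteDimensional {K : Type} {L M Y : Type*} [Field K]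
    [LieRing L] [LieAlgebra K L]
    [AddCommGroup M] [Module K M] [LieRingModule L M] [LieModule K L M]
    [AddCommGroup Y] [Module K Y] [LieRingModule L Y] [LieModule K L Y] {pr : M →ₗ⁅K,L⁆ Y}
    (h : ∀ (V : Type v) [AddCommGroup V] [Module K V] [LieRingModule L V] [LieModule K L V],
      FiniteDimensional K V → HasTensorLifts pr V)
    (V : Type w) [AddCommGroup V] [Module K V] [LieRingModule L V] [LieModule K L V]
    [FiniteDimensional K V] : HasTensorLifts pr V := by
  let e : ULift.{v} (Fin (Module.finrank K V) → K) ≃ₗ[K] V :=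
    ULift.moduleEquiv.trans (Module.finBasis K V).equivFun.symm
  let _ := e.lieRingModule L
  let _ := e.lieModule L
  exact (h _ (Module.Finite.equiv e.symm)).of_lieModuleEquiv (e.toLieModuleEquiv L)

theorem kostant_of_quotient_general
    (g : Type*) [LieRing g] [LieAlgebra ℂ g]
    (M Y : Type*)
    [AddCommGroup M] [Module ℂ M] [LieRingModule g M] [LieModule ℂ g M]
    [AddCommGroup Y] [Module ℂ Y] [LieRingModule g Y] [LieModule ℂ g Y]
    -- the short exact sequence `0 → X → M → Y → 0`
    (pr : M →ₗ⁅ℂ,g⁆ Y)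
    (hpr : Function.Surjective pr)
    -- for every finite-dimensional `V`, `Hom_g(M, M ⊗ V) → Hom_g(M, Y ⊗ V)` is surjective
    (hsurjV : ∀ (V : Type*) [AddCommGroup V] [Module ℂ V] [LieRingModule g V]
      [LieModule ℂ g V], FiniteDimensional ℂ V →
      ∀ f : M →ₗ⁅ℂ,g⁆ Y ⊗[ℂ] V, ∃ F : M →ₗ⁅ℂ,g⁆ M ⊗[ℂ] V,
        ∀ m : M, TensorProduct.map (pr : M →ₗ[ℂ] Y) LinearMap.id (F m) = f m)
    -- the canonical map `U(g) → L(M,M)` is surjective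
    (hM : ∀ f ∈ locFin g M M, ∃ u : UniversalEnvelopingAlgebra ℂ g, rho g M u = f) :
    -- then the canonical injection `U(g)/Ann(Y) → L(Y,Y)` is surjective
    ∀ f ∈ locFin g Y Y, ∃ u : UniversalEnvelopingAlgebra ℂ g, rho g Y u = f := by
  intro f hf
  obtain ⟨W, hW, hfW⟩ := mem_locFin_iff.1 hf
  let ψ : M →ₗ⁅ℂ,g⁆ Y ⊗[ℂ] Module.Dual ℂ W :=
    (tensorDualEquivHom ℂ g Y W).symm.toLieModuleHom.comp (W.incl.flip.comp pr)
  obtain ⟨F, hF⟩ := HasTensorLifts.of_forall_finiteDimensional hsurjV (Module.Dual ℂ W) ψ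
  let C : W →ₗ⁅ℂ,g⁆ Module.End ℂ M :=
    ((tensorDualEquivHom ℂ g M W).toLieModuleHom.comp F).flip
  obtain ⟨u, hu⟩ := hM _ (C.apply_mem_locFin ⟨f, hfW⟩)
  refine ⟨u, LinearMap.ext fun y => ?_⟩
  obtain ⟨m, rfl⟩ := hpr y
  calc rho g Y u (pr m) = pr (rho g M u m) := (pr.map_rho u m).symm
    _ = tensorDualEquivHom ℂ g Y W
          (TensorProduct.map (pr : M →ₗ[ℂ] Y) LinearMap.id (F m)) ⟨f, hfW⟩ := by
      rw [hu, tensorDualEquivHom_map]; rfl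
    _ = f (pr m) := by rw [hF]; simp [ψ]

/-- Let `0 → X → M → Y → 0` be a short exact sequence of `g`-modules such that for every
finite-dimensional `g`-module `V` the induced map `Hom_g(M, M ⊗ V) → Hom_g(M, Y ⊗ V)` is
surjective. If the canonical map `U(g) → L(M,M)` is surjective and composition with the
projection `M → Y` embeds `L(Y,Y)` into `L(M,Y)`, then the canonical injection
`U(g)/Ann(Y) → L(Y,Y)` is surjective. -/
theorem kostant_of_quotient
    (g : Type*) [LieRing g] [LieAlgebra ℂ g] [FiniteDimensional ℂ g]
    [LieAlgebra.IsSemisimple ℂ g]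
    (X M Y : Type*)
    [AddCommGroup X] [Module ℂ X] [LieRingModule g X] [LieModule ℂ g X]
    [AddCommGroup M] [Module ℂ M] [LieRingModule g M] [LieModule ℂ g M]
    [AddCommGroup Y] [Module ℂ Y] [LieRingModule g Y] [LieModule ℂ g Y]
    -- the short exact sequence `0 → X → M → Y → 0`
    (i : X →ₗ⁅ℂ,g⁆ M) (pr : M →ₗ⁅ℂ,g⁆ Y)
    (hi : Function.Injective i) (hpr : Function.Surjective pr)
    (hexact : ∀ m : M, pr m = 0 ↔ ∃ x : X, i x = m)
    -- for every finite-dimensional `V`, `Hom_g(M, M ⊗ V) → Hom_g(M, Y ⊗ V)` is surjective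
    (hsurjV : ∀ (V : Type*) [AddCommGroup V] [Module ℂ V] [LieRingModule g V]
      [LieModule ℂ g V], FiniteDimensional ℂ V →
      ∀ f : M →ₗ⁅ℂ,g⁆ Y ⊗[ℂ] V, ∃ F : M →ₗ⁅ℂ,g⁆ M ⊗[ℂ] V,
        ∀ m : M, TensorProduct.map (pr : M →ₗ[ℂ] Y) LinearMap.id (F m) = f m)
    -- the canonical map `U(g) → L(M,M)` is surjective
    (hM : ∀ f ∈ locFin g M M, ∃ u : UniversalEnvelopingAlgebra ℂ g, rho g M u = f)
    -- composition with `pr : M → Y` embeds `L(Y,Y)` into `L(M,Y)`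
    (hembed : Set.MapsTo (fun f : Y →ₗ[ℂ] Y => f ∘ₗ (pr : M →ₗ[ℂ] Y))
        (locFin g Y Y) (locFin g M Y) ∧
      Set.InjOn (fun f : Y →ₗ[ℂ] Y => f ∘ₗ (pr : M →ₗ[ℂ] Y)) (locFin g Y Y)) :
    -- then the canonical injection `U(g)/Ann(Y) → L(Y,Y)` is surjective
    ∀ f ∈ locFin g Y Y, ∃ u : UniversalEnvelopingAlgebra ℂ g, rho g Y u = f :=
  kostant_of_quotient_general g M Y pr hpr hsurjV hM
end
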